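/- arXiv:2011.03480 — 4 statements merged into one kernel-verified Lean document; each statement's English description precedes it below -/
import Mathlib

section
/- There is no group homomorphism φ : ℤ⁵ → ℤ⁵ that sends the bilinear form given by the block matrix G ⊕ [-39], where G = [[-7,1,0,1],[1,-2,1,0],[0,1,-2,1],[1,0,1,-3]], to the standard negative definite form -Id on ℤ⁵; i.e., there is no φ with (φx)·(φy)_{-Id} = x·y_{G⊕[-39]} for all x, y. -/
set_option maxHeartbeats 4000000
set_option maxRecDepth 100000


open Matrix


abbrev T5 := ℤ×ℤ×ℤ×ℤ×ℤ
def nrm (v:T5) : ℤ := v.1*v.1+v.2.1*v.2.1+v.2.2.1*v.2.2.1+v.2.2.2.1*v.2.2.2.1+v.2.2.2.2*v.2.2.2.2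
def dt (v w:T5) : ℤ := v.1*w.1+v.2.1*w.2.1+v.2.2.1*w.2.2.1+v.2.2.2.1*w.2.2.2.1+v.2.2.2.2*w.2.2.2.2
noncomputable def box1 : Finset T5 :=
  (Finset.Icc (-1:ℤ) 1) ×ˢ (Finset.Icc (-1:ℤ) 1) ×ˢ (Finset.Icc (-1:ℤ) 1) ×ˢ (Finset.Icc (-1:ℤ) 1) ×ˢ (Finset.Icc (-1:ℤ) 1)
noncomputable def boxp : Finset T5 :=
  (Finset.Icc (0:ℤ) 2) ×ˢ (Finset.Icc (0:ℤ) 2) ×ˢ (Finset.Icc (0:ℤ) 2) ×ˢ (Finset.Icc (0:ℤ) 2) ×ˢ (Finset.Icc (0:ℤ) 2)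
def dec1 (n : ℕ) : ℤ := (n % 5 : ℕ) - 2
def decode (l : List ℕ) : List T5 :=
  l.map (fun n => (dec1 n, dec1 (n/5), dec1 (n/25), dec1 (n/125), dec1 (n/625)))
def L7p : List T5 := decode [2967,2467,2367,2347,2963,2463,2363,2943,2443,2843,1843,2243,1743,2323,2223,1723,2339,2319,2219,1719]
def L2 : List T5 := decode [1556,1536,1436,936,2186,1686,1586,1566,1532,1432,932,2182,1682,1582,1412,912,2162,1662,812,2062,1062,2312,1462,962,2212,1712,1542,1442,942,2192,1692,1592,1558,1538,1438,938,2188,1688,1588,1568]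
def L3 : List T5 := decode [1531,1431,931,2181,1681,1581,1411,911,2161,1661,811,2061,1061,2311,1461,961,2211,1711,1541,1441,941,2191,1691,1591,1407,907,2157,1657,807,2057,1057,2307,1457,957,2207,1707,787,2037,1037,2287,837,2087,1087,2337,1417,917,2167,1667,817,2067,1067,2317,1467,967,2217,1717,1533,1433,933,2183,1683,1583,1413,913,2163,1663,813,2063,1063,2313,1463,963,2213,1713,1543,1443,943,2193,1693,1593]

theorem complete7 : ∀ x ∈ boxp.filter (fun v => nrm v = 7), x ∈ L7p := by decide
theorem complete2 : ∀ x ∈ box1.filter (fun v => nrm v = 2), x ∈ L2 := by decide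
theorem complete3 : ∀ x ∈ box1.filter (fun v => nrm v = 3), x ∈ L3 := by decide

theorem search : ∀ x ∈ L7p, ∀ y ∈ L2, dt x y = -1 → ∀ z ∈ L3,
    dt x z = -1 → dt y z = 0 → ∀ w ∈ L2, dt x w = 0 → dt y w = -1 → dt z w = -1 → False := by
  decide

theorem stmt_0 :
    ¬ ∃ φ : (Fin 5 → ℤ) →+ (Fin 5 → ℤ),
      ∀ x y : Fin 5 → ℤ,
        -((φ x) ⬝ᵥ (φ y)) =
          x ⬝ᵥ ((!![-7, 1, 0, 1, 0;
      1, -2, 1, 0, 0;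
      0, 1, -2, 1, 0;
      1, 0, 1, -3, 0;
      0, 0, 0, 0, -39] : Matrix (Fin 5) (Fin 5) ℤ) *ᵥ y) := by
  rintro ⟨φ, hφ⟩
  set e : Fin 5 → (Fin 5 → ℤ) := fun i j => if i = j then 1 else 0 with he
  set v : Fin 5 → (Fin 5 → ℤ) := fun i => φ (e i) with hv
  have key : ∀ i j : Fin 5, v i ⬝ᵥ v j =
      -((e i) ⬝ᵥ ((!![-7, 1, 0, 1, 0;
      1, -2, 1, 0, 0;
      0, 1, -2, 1, 0;
      1, 0, 1, -3, 0;
      0, 0, 0, 0, -39] : Matrix (Fin 5) (Fin 5) ℤ) *ᵥ (e j))) := by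
    intro i j
    have := hφ (e i) (e j)
    rw [hv]
    linarith
  have h00 : v 0 ⬝ᵥ v 0 = 7 := by rw [key]; norm_num [he, Matrix.mulVec, dotProduct, Fin.sum_univ_five]
  have h11 : v 1 ⬝ᵥ v 1 = 2 := by rw [key]; norm_num [he, Matrix.mulVec, dotProduct, Fin.sum_univ_five]
  have h22 : v 2 ⬝ᵥ v 2 = 2 := by rw [key]; norm_num [he, Matrix.mulVec, dotProduct, Fin.sum_univ_five, Matrix.cons_val] <;> rfl
  have h33 : v 3 ⬝ᵥ v 3 = 3 := by rw [key]; norm_num [he, Matrix.mulVec, dotProduct, Fin.sum_univ_five, Matrix.cons_val] <;> rfl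
  have h01 : v 0 ⬝ᵥ v 1 = -1 := by rw [key]; norm_num [he, Matrix.mulVec, dotProduct, Fin.sum_univ_five]
  have h02 : v 0 ⬝ᵥ v 2 = 0 := by rw [key]; norm_num [he, Matrix.mulVec, dotProduct, Fin.sum_univ_five, Matrix.cons_val] <;> rfl
  have h03 : v 0 ⬝ᵥ v 3 = -1 := by rw [key]; norm_num [he, Matrix.mulVec, dotProduct, Fin.sum_univ_five, Matrix.cons_val] <;> rfl
  have h12 : v 1 ⬝ᵥ v 2 = -1 := by rw [key]; norm_num [he, Matrix.mulVec, dotProduct, Fin.sum_univ_five, Matrix.cons_val] <;> rfl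
  have h13 : v 1 ⬝ᵥ v 3 = 0 := by rw [key]; norm_num [he, Matrix.mulVec, dotProduct, Fin.sum_univ_five, Matrix.cons_val] <;> rfl
  have h23 : v 2 ⬝ᵥ v 3 = -1 := by rw [key]; norm_num [he, Matrix.mulVec, dotProduct, Fin.sum_univ_five, Matrix.cons_val] <;> rfl
  -- sign normalization
  set ε : Fin 5 → ℤ := fun j => if v 0 j < 0 then -1 else 1 with hε
  set u : Fin 5 → (Fin 5 → ℤ) := fun i j => ε j * v i j with hu
  have hεsq : ∀ j, ε j * ε j = 1 := by
    intro j; rw [hε]; dsimp only; split <;> norm_num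
  have hdot : ∀ i k, u i ⬝ᵥ u k = v i ⬝ᵥ v k := by
    intro i k
    simp only [dotProduct, hu]
    refine Finset.sum_congr rfl fun j _ => ?_
    calc (ε j * v i j) * (ε j * v k j) = (ε j * ε j) * (v i j * v k j) := by ring
    _ = v i j * v k j := by rw [hεsq]; ring
  have hpos : ∀ j, 0 ≤ u 0 j := by
    intro j; rw [hu, hε]; dsimp only; split
    · rename_i h; nlinarith
    · rename_i h; push_neg at h; nlinarith
  have hbnd : ∀ i j (n : ℤ), u i ⬝ᵥ u i = n → u i j * u i j ≤ n := by
    intro i j n hn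
    rw [← hn]
    exact Finset.single_le_sum (f := fun j => u i j * u i j)
      (fun k _ => mul_self_nonneg _) (Finset.mem_univ j)
  set t : Fin 5 → T5 := fun i => (u i 0, u i 1, u i 2, u i 3, u i 4) with ht
  have hnrm : ∀ i, nrm (t i) = u i ⬝ᵥ u i := by
    intro i; rw [ht]; simp [nrm, dotProduct, Fin.sum_univ_five]
  have hdt : ∀ i k, dt (t i) (t k) = u i ⬝ᵥ u k := by
    intro i k; rw [ht]; simp [dt, dotProduct, Fin.sum_univ_five]
  have n0 : u 0 ⬝ᵥ u 0 = 7 := by rw [hdot]; exact h00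
  have n1 : u 1 ⬝ᵥ u 1 = 2 := by rw [hdot]; exact h11
  have n2 : u 2 ⬝ᵥ u 2 = 2 := by rw [hdot]; exact h22
  have n3 : u 3 ⬝ᵥ u 3 = 3 := by rw [hdot]; exact h33
  have hb0 : ∀ j, 0 ≤ u 0 j ∧ u 0 j ≤ 2 := fun j => by
    have := hbnd 0 j 7 n0; have := hpos j; constructor <;> nlinarith
  have hb1 : ∀ j, -1 ≤ u 1 j ∧ u 1 j ≤ 1 := fun j => by
    have := hbnd 1 j 2 n1; constructor <;> nlinarith
  have hb2 : ∀ j, -1 ≤ u 2 j ∧ u 2 j ≤ 1 := fun j => by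
    have := hbnd 2 j 2 n2; constructor <;> nlinarith
  have hb3 : ∀ j, -1 ≤ u 3 j ∧ u 3 j ≤ 1 := fun j => by
    have := hbnd 3 j 3 n3; constructor <;> nlinarith
  have m0 : t 0 ∈ L7p := by
    refine complete7 _ (Finset.mem_filter.mpr ⟨?_, by rw [hnrm]; exact n0⟩)
    have q0 := hb0 0; have q1 := hb0 1; have q2 := hb0 2; have q3 := hb0 3; have q4 := hb0 4
    simp only [ht, boxp, Finset.mem_product, Finset.mem_Icc]
    omega
  have m1 : t 1 ∈ L2 := by
    refine complete2 _ (Finset.mem_filter.mpr ⟨?_, by rw [hnrm]; exact n1⟩)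
    have q0 := hb1 0; have q1 := hb1 1; have q2 := hb1 2; have q3 := hb1 3; have q4 := hb1 4
    simp only [ht, box1, Finset.mem_product, Finset.mem_Icc]
    omega
  have m2 : t 2 ∈ L2 := by
    refine complete2 _ (Finset.mem_filter.mpr ⟨?_, by rw [hnrm]; exact n2⟩)
    have q0 := hb2 0; have q1 := hb2 1; have q2 := hb2 2; have q3 := hb2 3; have q4 := hb2 4
    simp only [ht, box1, Finset.mem_product, Finset.mem_Icc]
    omega
  have m3 : t 3 ∈ L3 := by
    refine complete3 _ (Finset.mem_filter.mpr ⟨?_, by rw [hnrm]; exact n3⟩)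
    have q0 := hb3 0; have q1 := hb3 1; have q2 := hb3 2; have q3 := hb3 3; have q4 := hb3 4
    simp only [ht, box1, Finset.mem_product, Finset.mem_Icc]
    omega
  exact search (t 0) m0 (t 1) m1 (by rw [hdt, hdot]; exact h01)
    (t 3) m3 (by rw [hdt, hdot]; exact h03)
    (by rw [hdt, hdot]; exact h13)
    (t 2) m2 (by rw [hdt, hdot]; exact h02)
    (by rw [hdt, hdot]; exact h12)
    (by rw [hdt, hdot, dotProduct_comm]; exact h23)
end

section
/- There is no group homomorphism φ : ℤ⁸ → ℤ⁸ embedding the bilinear form G ⊕ [-51] into the standard negative definite form -Id on ℤ⁸, where G = [[-2,1,0,0,0,0,0],[1,-2,1,0,0,0,0],[0,1,-2,1,0,0,1],[0,0,1,-3,1,0,1],[0,0,0,1,-3,1,0],[0,0,0,0,1,-2,1],[0,0,1,1,0,1,-2]]. -/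
set_option maxRecDepth 100000
set_option maxHeartbeats 12000000

open Matrix

/-! ### Arithmetic on base-3 codes of vectors in {-1,0,1}^8 -/

def dgN (n k : ℕ) : ℕ := n / k % 3

def dN (m n : ℕ) : ℕ :=
  dgN m 1 * dgN n 1 + dgN m 3 * dgN n 3 + dgN m 9 * dgN n 9 + dgN m 27 * dgN n 27 +
  dgN m 81 * dgN n 81 + dgN m 243 * dgN n 243 + dgN m 729 * dgN n 729 + dgN m 2187 * dgN n 2187

def sN (m : ℕ) : ℕ :=
  dgN m 1 + dgN m 3 + dgN m 9 + dgN m 27 + dgN m 81 + dgN m 243 + dgN m 729 + dgN m 2187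

def cnd (t m n : ℕ) : Bool := dN m n + t == sN m + sN n

def enc (v : Fin 8 → ℤ) : ℕ :=
  (v 0 + 1).toNat + 3 * (v 1 + 1).toNat + 9 * (v 2 + 1).toNat + 27 * (v 3 + 1).toNat +
  81 * (v 4 + 1).toNat + 243 * (v 5 + 1).toNat + 729 * (v 6 + 1).toNat + 2187 * (v 7 + 1).toNat

def Evec : Fin 8 → ℤ := ![1, -1, 0, 0, 0, 0, 0, 0]

/-! ### Candidate code lists -/

def LA : List ℕ := [1092, 1096, 2550, 2554, 3036, 3040, 3198, 3202, 3252, 3256, 3270, 3274, 3288, 3292, 3306, 3310, 3360, 3364, 3522, 3526, 4008, 4012, 5466, 5470]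
def LB : List ℕ := [363, 367, 849, 853, 1011, 1015, 1065, 1069, 1083, 1087, 1101, 1105, 1119, 1123, 1173, 1177, 1335, 1339, 1821, 1825, 2307, 2311, 2469, 2473, 2523, 2527, 2541, 2545, 2559, 2563, 2577, 2581, 2631, 2635, 2793, 2797, 2955, 2959, 3009, 3013, 3027, 3031, 3045, 3049, 3063, 3067, 3117, 3121, 3171, 3175, 3189, 3193, 3207, 3211, 3225, 3229, 3243, 3247, 3261, 3265, 3297, 3301, 3315, 3319, 3333, 3337, 3351, 3355, 3369, 3373, 3387, 3391, 3441, 3445, 3495, 3499, 3513, 3517, 3531, 3535, 3549, 3553, 3603, 3607, 3765, 3769, 3927, 3931, 3981, 3985, 3999, 4003, 4017, 4021, 4035, 4039, 4089, 4093, 4251, 4255, 4737, 4741, 5223, 5227, 5385, 5389, 5439, 5443, 5457, 5461, 5475, 5479, 5493, 5497, 5547, 5551, 5709, 5713, 6195, 6199]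
def LC : List ℕ := [364, 850, 1012, 1066, 1084, 1102, 1120, 1174, 1336, 1822, 2308, 2470, 2524, 2542, 2560, 2578, 2632, 2794, 2956, 3010, 3028, 3046, 3064, 3118, 3172, 3190, 3208, 3226, 3244, 3262, 3276, 3284, 3298, 3316, 3334, 3352, 3370, 3388, 3442, 3496, 3514, 3532, 3550, 3604, 3766, 3928, 3982, 4000, 4018, 4036, 4090, 4252, 4738, 5224, 5386, 5440, 5458, 5476, 5494, 5548, 5710, 6196]
def LD : List ℕ := [121, 283, 337, 355, 373, 391, 445, 607, 769, 823, 841, 859, 877, 931, 985, 1003, 1021, 1039, 1057, 1075, 1089, 1097, 1111, 1129, 1147, 1165, 1183, 1201, 1255, 1309, 1327, 1345, 1363, 1417, 1579, 1741, 1795, 1813, 1831, 1849, 1903, 2065, 2227, 2281, 2299, 2317, 2335, 2389, 2443, 2461, 2479, 2497, 2515, 2533, 2547, 2555, 2569, 2587, 2605, 2623, 2641, 2659, 2713, 2767, 2785, 2803, 2821, 2875, 2929, 2947, 2965, 2983, 3001, 3019, 3033, 3041, 3055, 3073, 3091, 3109, 3127, 3145, 3163, 3181, 3195, 3203, 3217,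 3235, 3249, 3257, 3267, 3275, 3285, 3293, 3303, 3311, 3325, 3343, 3357, 3365, 3379, 3397, 3415, 3433, 3451, 3469, 3487, 3505, 3519, 3527, 3541, 3559, 3577, 3595, 3613, 3631, 3685, 3739, 3757, 3775, 3793, 3847, 3901, 3919, 3937, 3955, 3973, 3991, 4005, 4013, 4027, 4045, 4063, 4081, 4099, 4117, 4171, 4225, 4243, 4261, 4279, 4333, 4495, 4657, 4711, 4729, 4747, 4765, 4819, 4981, 5143, 5197, 5215, 5233, 5251, 5305, 5359, 5377, 5395, 5413, 5431, 5449, 5463, 5471, 5485, 5503, 5521, 5539, 5557, 5575, 5629, 5683, 5701, 5719, 5737, 5791, 5953, 6115, 6169, 6187, 6205, 6223, 6277, 6439]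

/-! ### Digit lemmas -/

lemma nd (a0 a1 a2 a3 a4 a5 a6 a7 : ℕ) (h0 : a0 ≤ 2) (h1 : a1 ≤ 2) (h2 : a2 ≤ 2)
    (h3 : a3 ≤ 2) (h4 : a4 ≤ 2) (h5 : a5 ≤ 2) (h6 : a6 ≤ 2) (h7 : a7 ≤ 2) :
    ((a0 + 3*a1 + 9*a2 + 27*a3 + 81*a4 + 243*a5 + 729*a6 + 2187*a7) / 1 % 3 = a0) ∧
    ((a0 + 3*a1 + 9*a2 + 27*a3 + 81*a4 + 243*a5 + 729*a6 + 2187*a7) / 3 % 3 = a1) ∧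
    ((a0 + 3*a1 + 9*a2 + 27*a3 + 81*a4 + 243*a5 + 729*a6 + 2187*a7) / 9 % 3 = a2) ∧
    ((a0 + 3*a1 + 9*a2 + 27*a3 + 81*a4 + 243*a5 + 729*a6 + 2187*a7) / 27 % 3 = a3) ∧
    ((a0 + 3*a1 + 9*a2 + 27*a3 + 81*a4 + 243*a5 + 729*a6 + 2187*a7) / 81 % 3 = a4) ∧
    ((a0 + 3*a1 + 9*a2 + 27*a3 + 81*a4 + 243*a5 + 729*a6 + 2187*a7) / 243 % 3 = a5) ∧
    ((a0 + 3*a1 + 9*a2 + 27*a3 + 81*a4 + 243*a5 + 729*a6 + 2187*a7) / 729 % 3 = a6) ∧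
    ((a0 + 3*a1 + 9*a2 + 27*a3 + 81*a4 + 243*a5 + 729*a6 + 2187*a7) / 2187 % 3 = a7) := by
  refine ⟨by omega, by omega, by omega, by omega, by omega, by omega, by omega, by omega⟩

lemma digsN (v : Fin 8 → ℤ) (h : ∀ i, -1 ≤ v i ∧ v i ≤ 1) :
    dgN (enc v) 1 = (v 0 + 1).toNat ∧ dgN (enc v) 3 = (v 1 + 1).toNat ∧
    dgN (enc v) 9 = (v 2 + 1).toNat ∧ dgN (enc v) 27 = (v 3 + 1).toNat ∧
    dgN (enc v) 81 = (v 4 + 1).toNat ∧ dgN (enc v) 243 = (v 5 + 1).toNat ∧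
    dgN (enc v) 729 = (v 6 + 1).toNat ∧ dgN (enc v) 2187 = (v 7 + 1).toNat := by
  have hb : ∀ i : Fin 8, (v i + 1).toNat ≤ 2 := by
    intro i; obtain ⟨a, b⟩ := h i; omega
  exact nd _ _ _ _ _ _ _ _ (hb 0) (hb 1) (hb 2) (hb 3) (hb 4) (hb 5) (hb 6) (hb 7)

lemma enc_lt (v : Fin 8 → ℤ) (h : ∀ i, -1 ≤ v i ∧ v i ≤ 1) : enc v < 6561 := by
  obtain ⟨a0,b0⟩ := h 0; obtain ⟨a1,b1⟩ := h 1; obtain ⟨a2,b2⟩ := h 2; obtain ⟨a3,b3⟩ := h 3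
  obtain ⟨a4,b4⟩ := h 4; obtain ⟨a5,b5⟩ := h 5; obtain ⟨a6,b6⟩ := h 6; obtain ⟨a7,b7⟩ := h 7
  unfold enc; omega

lemma dot_enc (x y : Fin 8 → ℤ) (hx : ∀ i, -1 ≤ x i ∧ x i ≤ 1) (hy : ∀ i, -1 ≤ y i ∧ y i ≤ 1) :
    x ⬝ᵥ y + (sN (enc x) : ℤ) + (sN (enc y) : ℤ) = (dN (enc x) (enc y) : ℤ) + 8 := by
  obtain ⟨e0, e1, e2, e3, e4, e5, e6, e7⟩ := digsN x hx
  obtain ⟨f0, f1, f2, f3, f4, f5, f6, f7⟩ := digsN y hy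
  have cx : ∀ i : Fin 8, (((x i + 1).toNat : ℤ)) = x i + 1 := by
    intro i; obtain ⟨a, b⟩ := hx i; omega
  have cy : ∀ i : Fin 8, (((y i + 1).toNat : ℤ)) = y i + 1 := by
    intro i; obtain ⟨a, b⟩ := hy i; omega
  unfold dN sN
  rw [e0, e1, e2, e3, e4, e5, e6, e7, f0, f1, f2, f3, f4, f5, f6, f7]
  simp only [dotProduct, Fin.sum_univ_eight]
  push_cast
  rw [cx 0, cx 1, cx 2, cx 3, cx 4, cx 5, cx 6, cx 7,
      cy 0, cy 1, cy 2, cy 3, cy 4, cy 5, cy 6, cy 7]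
  ring

lemma cnd_eq (x y : Fin 8 → ℤ) (hx : ∀ i, -1 ≤ x i ∧ x i ≤ 1) (hy : ∀ i, -1 ≤ y i ∧ y i ≤ 1)
    (t : ℕ) (r : ℤ) (ht : (t : ℤ) + r = 8) (hd : x ⬝ᵥ y = r) :
    cnd t (enc x) (enc y) = true := by
  have h := dot_enc x y hx hy
  rw [hd] at h
  unfold cnd
  simp only [beq_iff_eq]
  omega

lemma small_entries (w : Fin 8 → ℤ) (h : w ⬝ᵥ w ≤ 3) : ∀ i, -1 ≤ w i ∧ w i ≤ 1 := by
  intro i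
  have h1 : w i * w i ≤ w ⬝ᵥ w :=
    Finset.single_le_sum (f := fun j => w j * w j) (fun j _ => mul_self_nonneg _) (Finset.mem_univ i)
  constructor <;> nlinarith

lemma Evec_norm : Evec ⬝ᵥ Evec = 2 := by
  simp [Evec, dotProduct, Fin.sum_univ_eight, Matrix.cons_val_succ]

lemma Evec_bnd : ∀ i, -1 ≤ Evec i ∧ Evec i ≤ 1 := small_entries Evec (by rw [Evec_norm]; norm_num)

lemma enc_Evec : enc Evec = 3278 := by decide

/-! ### Bounded sweeps -/

def swp (f : ℕ → Bool) (a : ℕ) : ℕ → Bool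
  | 0 => true
  | b+1 => f (81*a+b) && swp f a b

def swpo (f : ℕ → Bool) : ℕ → Bool
  | 0 => true
  | a+1 => swp f a 81 && swpo f a

lemma swp_sound (f : ℕ → Bool) (a : ℕ) :
    ∀ b, swp f a b = true → ∀ j, j < b → f (81*a+j) = true := by
  intro b
  induction b with
  | zero => intro _ j hj; omega
  | succ b ih =>
    intro h j hj
    rw [swp, Bool.and_eq_true] at h
    rcases Nat.lt_succ_iff_lt_or_eq.mp hj with h1 | h1
    · exact ih h.2 j h1
    · rw [h1]; exact h.1

lemma swpo_sound (f : ℕ → Bool) :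
    ∀ a, swpo f a = true → ∀ i, i < a → ∀ j, j < 81 → f (81*i+j) = true := by
  intro a
  induction a with
  | zero => intro _ i hi; omega
  | succ a ih =>
    intro h i hi j hj
    rw [swpo, Bool.and_eq_true] at h
    rcases Nat.lt_succ_iff_lt_or_eq.mp hi with h1 | h1
    · exact ih h.2 i h1 j hj
    · rw [h1]; exact swp_sound f a 81 h.1 j hj

lemma sweep_sound (f : ℕ → Bool) (h : swpo f 81 = true) : ∀ n, n < 6561 → f n = true := by
  intro n hn
  have := swpo_sound f 81 h (n/81) (by omega) (n%81) (by omega)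
  rwa [show 81*(n/81) + n%81 = n by omega] at this

/-! ### Membership tests -/

def tstA (n : ℕ) : Bool := !(cnd 6 n n && cnd 9 3278 n) || LA.contains n
def tstB (n : ℕ) : Bool := !(cnd 5 n n && cnd 9 3278 n) || LB.contains n
def tstC (n : ℕ) : Bool := !(cnd 6 n n && cnd 8 3278 n) || LC.contains n
def tstD (n : ℕ) : Bool := !(cnd 5 n n && cnd 8 3278 n) || LD.contains n

lemma tstA_true : swpo tstA 81 = true := by decide
lemma tstB_true : swpo tstB 81 = true := by decide
lemma tstC_true : swpo tstC 81 = true := by decide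
lemma tstD_true : swpo tstD 81 = true := by decide



lemma iso (v : Fin 8 → ℤ) (hv : v ⬝ᵥ v = 2) :
    ∃ T : (Fin 8 → ℤ) → (Fin 8 → ℤ), (∀ x y : Fin 8 → ℤ, T x ⬝ᵥ T y = x ⬝ᵥ y) ∧
      T v = Evec := by
  have hb := small_entries v (by omega)
  -- support has exactly two elements
  set s : Finset (Fin 8) := Finset.univ.filter (fun i => v i ≠ 0) with hs
  have hsq : ∀ i ∈ s, v i * v i = 1 := by
    intro i hi
    rw [hs, Finset.mem_filter] at hi
    obtain ⟨h1, h2⟩ := hb i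
    rcases hi with ⟨_, hne⟩
    interval_cases (v i) <;> simp_all
  have hsum : (s.card : ℤ) = 2 := by
    have : ∑ i ∈ s, v i * v i = 2 := by
      rw [hs]
      rw [Finset.sum_filter_of_ne (by intro i _ hne h0; exact hne (by rw [h0]; ring))]
      exact hv
    rw [Finset.sum_congr rfl hsq] at this
    simpa using this
  have hcard : s.card = 2 := by exact_mod_cast hsum
  obtain ⟨a, b, hab, hsab⟩ := Finset.card_eq_two.mp hcard
  have hmem : ∀ i, v i ≠ 0 ↔ (i = a ∨ i = b) := by
    intro i
    constructor
    · intro hne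
      have : i ∈ s := by rw [hs, Finset.mem_filter]; exact ⟨Finset.mem_univ i, hne⟩
      rw [hsab] at this; simpa using this
    · intro hi
      have : i ∈ s := by rw [hsab]; simpa using hi
      rw [hs, Finset.mem_filter] at this; exact this.2
  have va2 : v a * v a = 1 := hsq a (by rw [hsab]; simp)
  have vb2 : v b * v b = 1 := hsq b (by rw [hsab]; simp)
  have vout : ∀ c, c ≠ a → c ≠ b → v c = 0 := by
    intro c h1 h2
    by_contra hne
    rcases (hmem c).mp hne with h | h <;> [exact h1 h; exact h2 h]
  -- permutation
  set τ : Equiv.Perm (Fin 8) := Equiv.swap 0 a with hτ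
  set b2 : Fin 8 := τ b with hb2
  have hb2ne : b2 ≠ 0 := by
    rw [hb2]
    intro h
    have : b = τ 0 := by rw [← h]; simp [hτ, Equiv.swap_apply_self]
    rw [hτ, Equiv.swap_apply_left] at this
    exact hab.symm this
  set σ : Equiv.Perm (Fin 8) := (Equiv.swap 1 b2).trans τ with hσ
  have σ0 : σ 0 = a := by
    rw [hσ]
    simp only [Equiv.trans_apply]
    rw [Equiv.swap_apply_of_ne_of_ne (by decide) (Ne.symm hb2ne)]
    rw [hτ, Equiv.swap_apply_left]
  have σ1 : σ 1 = b := by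
    rw [hσ]
    simp only [Equiv.trans_apply]
    rw [Equiv.swap_apply_left, hb2, hτ, Equiv.swap_apply_self]
  -- signs
  set S : Fin 8 → ℤ := fun j => if j = 0 then v a else if j = 1 then -(v b) else 1 with hS
  have hS1 : ∀ j, S j * S j = 1 := by
    intro j
    rw [hS]
    by_cases h0 : j = 0
    · simp [h0, va2]
    · by_cases h1 : j = 1
      · simp [h0, h1]; linarith [vb2]
      · simp [h0, h1]
  refine ⟨fun x j => S j * x (σ j), ?_, ?_⟩
  · intro x y
    unfold dotProduct
    have : ∀ j, (S j * x (σ j)) * (S j * y (σ j)) = x (σ j) * y (σ j) := by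
      intro j
      rw [mul_mul_mul_comm, hS1 j, one_mul]
    rw [Finset.sum_congr rfl (fun j _ => this j)]
    exact Equiv.sum_comp σ (fun i => x i * y i)
  · funext j
    have hker : ∀ j : Fin 8, j ≠ 0 → j ≠ 1 → v (σ j) = 0 := by
      intro j h0 h1
      apply vout
      · intro h; exact h0 (σ.injective (h.trans σ0.symm))
      · intro h; exact h1 (σ.injective (h.trans σ1.symm))
    fin_cases j
    · simp [Evec, hS, σ0, va2]
    · simp only [hS]
      norm_num [Evec, σ1]
      linarith [vb2]
    · simp [Evec, hS, hker 2 (by decide) (by decide), Matrix.cons_val_succ]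
    · simp [Evec, hS, hker 3 (by decide) (by decide), Matrix.cons_val_succ]
    · simp [Evec, hS, hker 4 (by decide) (by decide), Matrix.cons_val_succ]
    · simp [Evec, hS, hker 5 (by decide) (by decide), Matrix.cons_val_succ]
    · simp [Evec, hS, hker 6 (by decide) (by decide), Matrix.cons_val_succ]
    · simp [Evec, hS, hker 7 (by decide) (by decide), Matrix.cons_val_succ]

lemma memA (x : Fin 8 → ℤ) (hb : ∀ i, -1 ≤ x i ∧ x i ≤ 1) (hn : x ⬝ᵥ x = 2)
    (he : Evec ⬝ᵥ x = (-1)) : enc x ∈ LA := by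
  have h1 : tstA (enc x) = true := sweep_sound tstA tstA_true (enc x) (enc_lt x hb)
  have c1 : cnd 6 (enc x) (enc x) = true := cnd_eq x x hb hb 6 2 (by norm_num) hn
  have c2 : cnd 9 3278 (enc x) = true := by
    rw [← enc_Evec]; exact cnd_eq Evec x Evec_bnd hb 9 ((-1)) (by norm_num) he
  unfold tstA at h1
  rw [c1, c2] at h1
  simpa using h1

lemma memB (x : Fin 8 → ℤ) (hb : ∀ i, -1 ≤ x i ∧ x i ≤ 1) (hn : x ⬝ᵥ x = 3)
    (he : Evec ⬝ᵥ x = (-1)) : enc x ∈ LB := by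
  have h1 : tstB (enc x) = true := sweep_sound tstB tstB_true (enc x) (enc_lt x hb)
  have c1 : cnd 5 (enc x) (enc x) = true := cnd_eq x x hb hb 5 3 (by norm_num) hn
  have c2 : cnd 9 3278 (enc x) = true := by
    rw [← enc_Evec]; exact cnd_eq Evec x Evec_bnd hb 9 ((-1)) (by norm_num) he
  unfold tstB at h1
  rw [c1, c2] at h1
  simpa using h1

lemma memC (x : Fin 8 → ℤ) (hb : ∀ i, -1 ≤ x i ∧ x i ≤ 1) (hn : x ⬝ᵥ x = 2)
    (he : Evec ⬝ᵥ x = 0) : enc x ∈ LC := by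
  have h1 : tstC (enc x) = true := sweep_sound tstC tstC_true (enc x) (enc_lt x hb)
  have c1 : cnd 6 (enc x) (enc x) = true := cnd_eq x x hb hb 6 2 (by norm_num) hn
  have c2 : cnd 8 3278 (enc x) = true := by
    rw [← enc_Evec]; exact cnd_eq Evec x Evec_bnd hb 8 (0) (by norm_num) he
  unfold tstC at h1
  rw [c1, c2] at h1
  simpa using h1

lemma memD (x : Fin 8 → ℤ) (hb : ∀ i, -1 ≤ x i ∧ x i ≤ 1) (hn : x ⬝ᵥ x = 3)
    (he : Evec ⬝ᵥ x = 0) : enc x ∈ LD := by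
  have h1 : tstD (enc x) = true := sweep_sound tstD tstD_true (enc x) (enc_lt x hb)
  have c1 : cnd 5 (enc x) (enc x) = true := cnd_eq x x hb hb 5 3 (by norm_num) hn
  have c2 : cnd 8 3278 (enc x) = true := by
    rw [← enc_Evec]; exact cnd_eq Evec x Evec_bnd hb 8 (0) (by norm_num) he
  unfold tstD at h1
  rw [c1, c2] at h1
  simpa using h1

/-! ### The search -/

def searchB : Bool :=
  LA.any fun c1 =>
    LB.any fun c2 => cnd 9 c1 c2 &&
    (LC.any fun c3 => cnd 9 c1 c3 && cnd 8 c2 c3 &&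
    (LA.any fun c4 => cnd 8 c1 c4 && cnd 8 c2 c4 && cnd 8 c3 c4 &&
    (LD.any fun c5 => cnd 8 c1 c5 && cnd 9 c2 c5 && cnd 9 c3 c5 && cnd 8 c4 c5 &&
    (LC.any fun c6 => cnd 8 c1 c6 && cnd 8 c2 c6 && cnd 8 c3 c6 && cnd 9 c4 c6 && cnd 8 c5 c6))))

lemma searchB_false : searchB = false := by decide

/-! ### Key lemma -/

lemma key (u1 u2 u3 u4 u5 u6 : Fin 8 → ℤ)
    (n1 : u1 ⬝ᵥ u1 = 2) (n2 : u2 ⬝ᵥ u2 = 3) (n3 : u3 ⬝ᵥ u3 = 2)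
    (n4 : u4 ⬝ᵥ u4 = 2) (n5 : u5 ⬝ᵥ u5 = 3) (n6 : u6 ⬝ᵥ u6 = 2)
    (e1 : Evec ⬝ᵥ u1 = -1) (e2 : Evec ⬝ᵥ u2 = -1) (e3 : Evec ⬝ᵥ u3 = 0)
    (e4 : Evec ⬝ᵥ u4 = -1) (e5 : Evec ⬝ᵥ u5 = 0) (e6 : Evec ⬝ᵥ u6 = 0)
    (d12 : u1 ⬝ᵥ u2 = -1) (d13 : u1 ⬝ᵥ u3 = -1) (d23 : u2 ⬝ᵥ u3 = 0)
    (d14 : u1 ⬝ᵥ u4 = 0) (d24 : u2 ⬝ᵥ u4 = 0) (d34 : u3 ⬝ᵥ u4 = 0)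
    (d15 : u1 ⬝ᵥ u5 = 0) (d25 : u2 ⬝ᵥ u5 = -1) (d35 : u3 ⬝ᵥ u5 = -1) (d45 : u4 ⬝ᵥ u5 = 0)
    (d16 : u1 ⬝ᵥ u6 = 0) (d26 : u2 ⬝ᵥ u6 = 0) (d36 : u3 ⬝ᵥ u6 = 0)
    (d46 : u4 ⬝ᵥ u6 = -1) (d56 : u5 ⬝ᵥ u6 = 0) : False := by
  have b1 := small_entries u1 (by rw [n1]; norm_num)
  have b2 := small_entries u2 n2.le
  have b3 := small_entries u3 (by rw [n3]; norm_num)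
  have b4 := small_entries u4 (by rw [n4]; norm_num)
  have b5 := small_entries u5 n5.le
  have b6 := small_entries u6 (by rw [n6]; norm_num)
  have hs : searchB = true := by
    unfold searchB
    simp only [List.any_eq_true, Bool.and_eq_true]
    refine ⟨enc u1, memA u1 b1 n1 e1,
           enc u2, memB u2 b2 n2 e2, cnd_eq u1 u2 b1 b2 9 (-1) (by norm_num) d12,
           enc u3, memC u3 b3 n3 e3,
             ⟨cnd_eq u1 u3 b1 b3 9 (-1) (by norm_num) d13,
              cnd_eq u2 u3 b2 b3 8 0 (by norm_num) d23⟩,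
           enc u4, memA u4 b4 n4 e4,
             ⟨⟨cnd_eq u1 u4 b1 b4 8 0 (by norm_num) d14,
               cnd_eq u2 u4 b2 b4 8 0 (by norm_num) d24⟩,
              cnd_eq u3 u4 b3 b4 8 0 (by norm_num) d34⟩,
           enc u5, memD u5 b5 n5 e5,
             ⟨⟨⟨cnd_eq u1 u5 b1 b5 8 0 (by norm_num) d15,
                cnd_eq u2 u5 b2 b5 9 (-1) (by norm_num) d25⟩,
               cnd_eq u3 u5 b3 b5 9 (-1) (by norm_num) d35⟩,
              cnd_eq u4 u5 b4 b5 8 0 (by norm_num) d45⟩,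
           enc u6, memC u6 b6 n6 e6,
             ⟨⟨⟨cnd_eq u1 u6 b1 b6 8 0 (by norm_num) d16,
                cnd_eq u2 u6 b2 b6 8 0 (by norm_num) d26⟩,
               cnd_eq u3 u6 b3 b6 8 0 (by norm_num) d36⟩,
              cnd_eq u4 u6 b4 b6 9 (-1) (by norm_num) d46⟩,
             cnd_eq u5 u6 b5 b6 8 0 (by norm_num) d56⟩
  have hf := searchB_false
  rw [hs] at hf
  exact absurd hf (by decide)

/-! ### Main theorem -/

theorem stmt_11 :
    ¬ ∃ φ : (Fin 8 → ℤ) →+ (Fin 8 → ℤ),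
      ∀ x y : Fin 8 → ℤ,
        -((φ x) ⬝ᵥ (φ y)) =
          x ⬝ᵥ ((!![-2, 1, 0, 0, 0, 0, 0, 0;
      1, -2, 1, 0, 0, 0, 0, 0;
      0, 1, -2, 1, 0, 0, 1, 0;
      0, 0, 1, -3, 1, 0, 1, 0;
      0, 0, 0, 1, -3, 1, 0, 0;
      0, 0, 0, 0, 1, -2, 1, 0;
      0, 0, 1, 1, 0, 1, -2, 0;
      0, 0, 0, 0, 0, 0, 0, -51] : Matrix (Fin 8) (Fin 8) ℤ) *ᵥ y) := by
  rintro ⟨φ, h⟩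
  have g : ∀ i j : Fin 8, φ (Pi.single i 1) ⬝ᵥ φ (Pi.single j 1) =
      -((!![-2, 1, 0, 0, 0, 0, 0, 0;
      1, -2, 1, 0, 0, 0, 0, 0;
      0, 1, -2, 1, 0, 0, 1, 0;
      0, 0, 1, -3, 1, 0, 1, 0;
      0, 0, 0, 1, -3, 1, 0, 0;
      0, 0, 0, 0, 1, -2, 1, 0;
      0, 0, 1, 1, 0, 1, -2, 0;
      0, 0, 0, 0, 0, 0, 0, -51] : Matrix (Fin 8) (Fin 8) ℤ) i j) := by
    intro i j
    have hh := h (Pi.single i 1) (Pi.single j 1)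
    rw [Matrix.mulVec_single, single_dotProduct] at hh
    simp only [one_mul, mul_one, MulOpposite.op_one, one_smul, Matrix.col_apply] at hh
    omega
  obtain ⟨T, hT, hTv⟩ := iso (φ (Pi.single 2 1)) (by rw [g 2 2]; decide)
  refine key (T (φ (Pi.single 6 1))) (T (φ (Pi.single 3 1))) (T (φ (Pi.single 5 1)))
    (T (φ (Pi.single 1 1))) (T (φ (Pi.single 4 1))) (T (φ (Pi.single 0 1)))
    (by rw [hT, g]; decide) (by rw [hT, g]; decide) (by rw [hT, g]; decide)
    (by rw [hT, g]; decide) (by rw [hT, g]; decide) (by rw [hT, g]; decide)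
    (by rw [← hTv, hT, g]; decide) (by rw [← hTv, hT, g]; decide) (by rw [← hTv, hT, g]; decide)
    (by rw [← hTv, hT, g]; decide) (by rw [← hTv, hT, g]; decide) (by rw [← hTv, hT, g]; decide)
    (by rw [hT, g]; decide) (by rw [hT, g]; decide) (by rw [hT, g]; decide)
    (by rw [hT, g]; decide) (by rw [hT, g]; decide) (by rw [hT, g]; decide)
    (by rw [hT, g]; decide) (by rw [hT, g]; decide) (by rw [hT, g]; decide)
    (by rw [hT, g]; decide) (by rw [hT, g]; decide) (by rw [hT, g]; decide)
    (by rw [hT, g]; decide) (by rw [hT, g]; decide) (by rw [hT, g]; decide)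
end

section
/- There is no group homomorphism φ : ℤ⁵ → ℤ⁵ embedding the bilinear form G ⊕ [-51], where G = [[-2,0,0,1],[0,-2,1,0],[0,1,-3,1],[1,0,1,-6]], into the standard negative definite form -Id on ℤ⁵. -/
open Matrix

def rng1 : List ℤ := [-1,0,1]
def rng2 : List ℤ := [-2,-1,0,1,2]
def gen (r : List ℤ) : List (List ℤ) :=
  r.flatMap fun a => r.flatMap fun b => r.flatMap fun c =>
    r.flatMap fun d => r.map fun e => [a,b,c,d,e]
def dot : List ℤ → List ℤ → ℤ
  | a::as, b::bs => a*b + dot as bs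
  | _, _ => 0
def V2 : List (List ℤ) := (gen rng1).filter fun v => dot v v == 2
def V3 : List (List ℤ) := (gen rng1).filter fun v => dot v v == 3
def V6 : List (List ℤ) := (gen rng2).filter fun v => dot v v == 6

lemma mem_gen {r : List ℤ} {a b c d e : ℤ} (ha : a ∈ r) (hb : b ∈ r)
    (hc : c ∈ r) (hd : d ∈ r) (he : e ∈ r) : [a,b,c,d,e] ∈ gen r := by
  simp only [gen, List.mem_flatMap, List.mem_map]
  exact ⟨a, ha, b, hb, c, hc, d, hd, e, he, rfl⟩

lemma mem_rng1 {x : ℤ} (h1 : -1 ≤ x) (h2 : x ≤ 1) : x ∈ rng1 := by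
  interval_cases x <;> simp [rng1]

lemma mem_rng2 {x : ℤ} (h1 : -2 ≤ x) (h2 : x ≤ 2) : x ∈ rng2 := by
  interval_cases x <;> simp [rng2]

lemma sq_bnd1 {x : ℤ} (h : x*x ≤ 3) : -1 ≤ x ∧ x ≤ 1 := by
  constructor <;> nlinarith

lemma sq_bnd2 {x : ℤ} (h : x*x ≤ 6) : -2 ≤ x ∧ x ≤ 2 := by
  constructor <;> nlinarith

lemma mem_gen1 {a b c d e : ℤ} (h : a*a+b*b+c*c+d*d+e*e ≤ 3) :
    [a,b,c,d,e] ∈ gen rng1 := by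
  have ha := sq_bnd1 (x := a) (by nlinarith [mul_self_nonneg b, mul_self_nonneg c, mul_self_nonneg d, mul_self_nonneg e])
  have hb := sq_bnd1 (x := b) (by nlinarith [mul_self_nonneg a, mul_self_nonneg c, mul_self_nonneg d, mul_self_nonneg e])
  have hc := sq_bnd1 (x := c) (by nlinarith [mul_self_nonneg a, mul_self_nonneg b, mul_self_nonneg d, mul_self_nonneg e])
  have hd := sq_bnd1 (x := d) (by nlinarith [mul_self_nonneg a, mul_self_nonneg b, mul_self_nonneg c, mul_self_nonneg e])
  have he := sq_bnd1 (x := e) (by nlinarith [mul_self_nonneg a, mul_self_nonneg b, mul_self_nonneg c, mul_self_nonneg d])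
  exact mem_gen (mem_rng1 ha.1 ha.2) (mem_rng1 hb.1 hb.2) (mem_rng1 hc.1 hc.2)
    (mem_rng1 hd.1 hd.2) (mem_rng1 he.1 he.2)

lemma mem_gen2 {a b c d e : ℤ} (h : a*a+b*b+c*c+d*d+e*e ≤ 6) :
    [a,b,c,d,e] ∈ gen rng2 := by
  have ha := sq_bnd2 (x := a) (by nlinarith [mul_self_nonneg b, mul_self_nonneg c, mul_self_nonneg d, mul_self_nonneg e])
  have hb := sq_bnd2 (x := b) (by nlinarith [mul_self_nonneg a, mul_self_nonneg c, mul_self_nonneg d, mul_self_nonneg e])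
  have hc := sq_bnd2 (x := c) (by nlinarith [mul_self_nonneg a, mul_self_nonneg b, mul_self_nonneg d, mul_self_nonneg e])
  have hd := sq_bnd2 (x := d) (by nlinarith [mul_self_nonneg a, mul_self_nonneg b, mul_self_nonneg c, mul_self_nonneg e])
  have he := sq_bnd2 (x := e) (by nlinarith [mul_self_nonneg a, mul_self_nonneg b, mul_self_nonneg c, mul_self_nonneg d])
  exact mem_gen (mem_rng2 ha.1 ha.2) (mem_rng2 hb.1 hb.2) (mem_rng2 hc.1 hc.2)
    (mem_rng2 hd.1 hd.2) (mem_rng2 he.1 he.2)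

def check : Bool :=
  V2.all fun v0 =>
    ((V2.filter fun v1 => dot v0 v1 == 0).all fun v1 =>
      ((V3.filter fun v2 => dot v0 v2 == 0 && dot v1 v2 == -1).all fun v2 =>
        (((V6.filter fun v3 => dot v0 v3 == -1).filter fun v3 => dot v1 v3 == 0).all
          fun v3 => !(dot v2 v3 == -1))))

set_option maxRecDepth 100000 in
set_option maxHeartbeats 16000000 in
theorem check_true : check = true := by decide

lemma tolist (u w : Fin 5 → ℤ) :
    dot [u 0, u 1, u 2, u 3, u 4] [w 0, w 1, w 2, w 3, w 4] = u ⬝ᵥ w := by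
  simp only [dot, dotProduct, Fin.sum_univ_five]
  ring

theorem stmt_12 :
    ¬ ∃ φ : (Fin 5 → ℤ) →+ (Fin 5 → ℤ),
      ∀ x y : Fin 5 → ℤ,
        -((φ x) ⬝ᵥ (φ y)) =
          x ⬝ᵥ ((!![-2, 0, 0, 1, 0;
      0, -2, 1, 0, 0;
      0, 1, -3, 1, 0;
      1, 0, 1, -6, 0;
      0, 0, 0, 0, -51] : Matrix (Fin 5) (Fin 5) ℤ) *ᵥ y) := by
  rintro ⟨φ, h⟩
  set e0 : Fin 5 → ℤ := ![1,0,0,0,0] with he0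
  set e1 : Fin 5 → ℤ := ![0,1,0,0,0] with he1
  set e2 : Fin 5 → ℤ := ![0,0,1,0,0] with he2
  set e3 : Fin 5 → ℤ := ![0,0,0,1,0] with he3
  have h00 := h e0 e0
  have h01 := h e0 e1
  have h02 := h e0 e2
  have h03 := h e0 e3
  have h11 := h e1 e1
  have h12 := h e1 e2
  have h13 := h e1 e3
  have h22 := h e2 e2
  have h23 := h e2 e3
  have h33 := h e3 e3
  simp only [he0, he1, he2, he3, dotProduct, Matrix.mulVec, Fin.sum_univ_five,
    Matrix.cons_val_zero, Matrix.cons_val_one, Matrix.head_cons, Matrix.cons_val_two,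
    Matrix.tail_cons, Matrix.cons_val_three, Matrix.cons_val_four, Matrix.head_fin_const,
    Matrix.cons_val', Matrix.cons_val_fin_one, Matrix.empty_val',
    Matrix.of_apply, Matrix.cons_val_succ] at h00 h01 h02 h03 h11 h12 h13 h22 h23 h33
  norm_num at h00 h01 h02 h03 h11 h12 h13 h22 h23 h33
  set L0 : List ℤ := [φ e0 0, φ e0 1, φ e0 2, φ e0 3, φ e0 4] with hL0
  set L1 : List ℤ := [φ e1 0, φ e1 1, φ e1 2, φ e1 3, φ e1 4] with hL1
  set L2 : List ℤ := [φ e2 0, φ e2 1, φ e2 2, φ e2 3, φ e2 4] with hL2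
  set L3 : List ℤ := [φ e3 0, φ e3 1, φ e3 2, φ e3 3, φ e3 4] with hL3
  have d00 : dot L0 L0 = 2 := by simp only [hL0, dot]; linarith
  have d01 : dot L0 L1 = 0 := by simp only [hL0, hL1, dot]; linarith
  have d02 : dot L0 L2 = 0 := by simp only [hL0, hL2, dot]; linarith
  have d03 : dot L0 L3 = -1 := by simp only [hL0, hL3, dot]; linarith
  have d11 : dot L1 L1 = 2 := by simp only [hL1, dot]; linarith
  have d12 : dot L1 L2 = -1 := by simp only [hL1, hL2, dot]; linarith
  have d13 : dot L1 L3 = 0 := by simp only [hL1, hL3, dot]; linarith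
  have d22 : dot L2 L2 = 3 := by simp only [hL2, dot]; linarith
  have d23 : dot L2 L3 = -1 := by simp only [hL2, hL3, dot]; linarith
  have d33 : dot L3 L3 = 6 := by simp only [hL3, dot]; linarith
  have m0 : L0 ∈ V2 := List.mem_filter.mpr ⟨mem_gen1 (by simp only [hL0, dot] at d00; linarith), by simp [d00]⟩
  have m1 : L1 ∈ V2 := List.mem_filter.mpr ⟨mem_gen1 (by simp only [hL1, dot] at d11; linarith), by simp [d11]⟩
  have m2 : L2 ∈ V3 := List.mem_filter.mpr ⟨mem_gen1 (by simp only [hL2, dot] at d22; linarith), by simp [d22]⟩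
  have m3 : L3 ∈ V6 := List.mem_filter.mpr ⟨mem_gen2 (by simp only [hL3, dot] at d33; linarith), by simp [d33]⟩
  have H := check_true
  unfold check at H
  simp only [List.all_eq_true, List.mem_filter, Bool.and_eq_true, beq_iff_eq,
    Bool.not_eq_true', beq_eq_false_iff_ne, and_imp] at H
  exact H L0 m0 L1 m1 d01 L2 m2 d02 d12 L3 m3 d03 d13 d23
end

section
/- There is no group homomorphism φ : ℤ⁹ → ℤ⁹ embedding the bilinear form G ⊕ [-31] into the standard negative definite form -Id on ℤ⁹, where G = [[-2,1,0,0,0,0,0,0],[1,-2,1,0,0,0,0,0],[0,1,-2,1,0,0,0,0],[0,0,1,-2,0,0,0,0],[0,0,0,0,-2,1,0,0],[0,0,0,0,1,-3,1,0],[0,0,0,0,0,1,-2,1],[0,0,0,0,0,0,1,-2]]. -/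
open Matrix

/-- Determinant of a block-diagonal integer matrix (specialized helper). -/
lemma stmt14_det_blocks {k l : ℕ} (A : Matrix (Fin k) (Fin k) ℤ)
    (B : Matrix (Fin l) (Fin l) ℤ) :
    (Matrix.fromBlocks A 0 0 B).det = A.det * B.det :=
  Matrix.det_fromBlocks_zero₂₁ _ _ _

/-- Determinant is invariant under the reindexing `Fin k ⊕ Fin l ≃ Fin (k + l)`. -/
lemma stmt14_det_reindex {k l : ℕ} (A : Matrix (Fin k ⊕ Fin l) (Fin k ⊕ Fin l) ℤ) :
    (Matrix.reindex finSumFinEquiv finSumFinEquiv A).det = A.det :=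
  Matrix.det_reindex_self _ _

/-- Top-left 4×4 block of the Goeritz matrix. -/
def stmt14A : Matrix (Fin 4) (Fin 4) ℤ := !![-2,1,0,0; 1,-2,1,0; 0,1,-2,1; 0,0,1,-2]

/-- Second 4×4 block of the Goeritz matrix. -/
def stmt14B : Matrix (Fin 4) (Fin 4) ℤ := !![-2,1,0,0; 1,-3,1,0; 0,1,-2,1; 0,0,1,-2]

/-- The 8×8 direct sum of the two blocks. -/
def stmt14C : Matrix (Fin 8) (Fin 8) ℤ :=
  Matrix.reindex (finSumFinEquiv (m := 4) (n := 4)) (finSumFinEquiv (m := 4) (n := 4))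
    (Matrix.fromBlocks stmt14A 0 0 stmt14B)

lemma stmt14A_det : stmt14A.det = 5 := by
  norm_num [stmt14A, Matrix.det_succ_row_zero, Fin.sum_univ_succ]
  decide

lemma stmt14B_det : stmt14B.det = 11 := by
  norm_num [stmt14B, Matrix.det_succ_row_zero, Fin.sum_univ_succ]
  decide

lemma stmt14_det_neg {k : ℕ} (hk : Odd k) (A : Matrix (Fin k) (Fin k) ℤ) :
    (-A).det = -(A.det) := by
  rw [Matrix.det_neg, Fintype.card_fin, hk.neg_one_pow]
  ring

lemma stmt14_det_sq {k : ℕ} (W : Matrix (Fin k) (Fin k) ℤ) :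
    (Wᵀ * W).det = W.det * W.det := by
  rw [Matrix.det_mul, Matrix.det_transpose]

lemma stmt14C_det : stmt14C.det = 55 := by
  rw [stmt14C, stmt14_det_reindex, stmt14_det_blocks, stmt14A_det, stmt14B_det]
  norm_num

lemma stmt14M_eq : (!![-2, 1, 0, 0, 0, 0, 0, 0, 0;
      1, -2, 1, 0, 0, 0, 0, 0, 0;
      0, 1, -2, 1, 0, 0, 0, 0, 0;
      0, 0, 1, -2, 0, 0, 0, 0, 0;
      0, 0, 0, 0, -2, 1, 0, 0, 0;
      0, 0, 0, 0, 1, -3, 1, 0, 0;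
      0, 0, 0, 0, 0, 1, -2, 1, 0;
      0, 0, 0, 0, 0, 0, 1, -2, 0;
      0, 0, 0, 0, 0, 0, 0, 0, -31] : Matrix (Fin 9) (Fin 9) ℤ)
    = Matrix.reindex (finSumFinEquiv (m := 8) (n := 1)) (finSumFinEquiv (m := 8) (n := 1))
        (Matrix.fromBlocks stmt14C 0 0 !![-31]) := by
  ext i j
  fin_cases i <;> fin_cases j <;> decide

lemma stmt14M_det : (!![-2, 1, 0, 0, 0, 0, 0, 0, 0;
      1, -2, 1, 0, 0, 0, 0, 0, 0;
      0, 1, -2, 1, 0, 0, 0, 0, 0;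
      0, 0, 1, -2, 0, 0, 0, 0, 0;
      0, 0, 0, 0, -2, 1, 0, 0, 0;
      0, 0, 0, 0, 1, -3, 1, 0, 0;
      0, 0, 0, 0, 0, 1, -2, 1, 0;
      0, 0, 0, 0, 0, 0, 1, -2, 0;
      0, 0, 0, 0, 0, 0, 0, 0, -31] : Matrix (Fin 9) (Fin 9) ℤ).det = -1705 := by
  rw [stmt14M_eq, stmt14_det_reindex, stmt14_det_blocks, stmt14C_det]
  norm_num [Matrix.det_fin_one]

theorem stmt_14 :
    ¬ ∃ φ : (Fin 9 → ℤ) →+ (Fin 9 → ℤ),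
      ∀ x y : Fin 9 → ℤ,
        -((φ x) ⬝ᵥ (φ y)) =
          x ⬝ᵥ ((!![-2, 1, 0, 0, 0, 0, 0, 0, 0;
      1, -2, 1, 0, 0, 0, 0, 0, 0;
      0, 1, -2, 1, 0, 0, 0, 0, 0;
      0, 0, 1, -2, 0, 0, 0, 0, 0;
      0, 0, 0, 0, -2, 1, 0, 0, 0;
      0, 0, 0, 0, 1, -3, 1, 0, 0;
      0, 0, 0, 0, 0, 1, -2, 1, 0;
      0, 0, 0, 0, 0, 0, 1, -2, 0;
      0, 0, 0, 0, 0, 0, 0, 0, -31] : Matrix (Fin 9) (Fin 9) ℤ) *ᵥ y) := by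
  rintro ⟨φ, hφ⟩
  set M : Matrix (Fin 9) (Fin 9) ℤ := !![-2, 1, 0, 0, 0, 0, 0, 0, 0;
      1, -2, 1, 0, 0, 0, 0, 0, 0;
      0, 1, -2, 1, 0, 0, 0, 0, 0;
      0, 0, 1, -2, 0, 0, 0, 0, 0;
      0, 0, 0, 0, -2, 1, 0, 0, 0;
      0, 0, 0, 0, 1, -3, 1, 0, 0;
      0, 0, 0, 0, 0, 1, -2, 1, 0;
      0, 0, 0, 0, 0, 0, 1, -2, 0;
      0, 0, 0, 0, 0, 0, 0, 0, -31] with hM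
  set W : Matrix (Fin 9) (Fin 9) ℤ := Matrix.of fun i j => φ (Pi.single j 1) i with hWdef
  have key : Wᵀ * W = -M := by
    ext i j
    have h := hφ (Pi.single i 1) (Pi.single j 1)
    have hL : (Wᵀ * W) i j = (φ (Pi.single i 1)) ⬝ᵥ (φ (Pi.single j 1)) := by
      simp [Matrix.mul_apply, dotProduct, hWdef]
    have hR : (Pi.single i 1 : Fin 9 → ℤ) ⬝ᵥ (M *ᵥ Pi.single j 1) = M i j := by
      simp [Matrix.mulVec_single]
    rw [hL]
    rw [hR] at h
    simp only [Matrix.neg_apply]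
    linarith
  have hdet : W.det * W.det = (-M).det := by
    rw [← key, stmt14_det_sq]
  have hMdet : (-M).det = 1705 := by
    rw [stmt14_det_neg (by decide : Odd 9), hM, stmt14M_det]
    norm_num
  rw [hMdet] at hdet
  have hn : W.det.natAbs * W.det.natAbs = 1705 := by
    have := congrArg Int.natAbs hdet
    simpa [Int.natAbs_mul] using this
  rcases Nat.lt_or_ge W.det.natAbs 42 with h | h
  · have := Nat.mul_le_mul (Nat.le_of_lt_succ h) (Nat.le_of_lt_succ h)
    omega
  · have := Nat.mul_le_mul h h
    omega
end
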